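/- arXiv:2212.01633 — 3 statements merged into one kernel-verified Lean document; each statement's English description precedes it below -/
import Mathlib

section
/- For every integer d ≥ 2, the total number of partition modules P↑(d) = Σ_{q=2}^{d} p(q) satisfies Σ_{q=2}^{d} p(q) < d^{1/4} · e^{c·√d}, where p(q) denotes the number of partitions of the integer q and c = π·√(2/3). -/
/-!
A partition of `q ≤ d` is determined by its multiplicities of the parts `1, …, d`, so
`∑_{q ≤ d} p(q) x^q ≤ ∏_{k ≤ d} (1 - x^k)⁻¹` for `0 ≤ x < 1`. For `x = e^{-t}`, expanding
`-log (1 - y) = ∑_j y^j / j` and using `∑_k e^{-jkt} ≤ 1/(e^{jt} - 1) ≤ 1/(jt)` bounds the log of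
the product by `∑_j 1/(j² t) = π²/(6t)`. Hence `∑_{q ≤ d} p(q) ≤ e^{td} ∑_{q ≤ d} p(q) e^{-tq}
≤ exp (t d + π²/(6t))` for every `t > 0`; minimising over `t` gives `exp (π √(2/3) √d)`.
-/

open Real Finset

namespace Nat.Partition

variable {n : ℕ}

theorem count_parts_le (P : n.Partition) (k : ℕ) : P.parts.count k ≤ n :=
  calc P.parts.count k ≤ Multiset.card P.parts := Multiset.count_le_card _ _
    _ = Multiset.card P.parts • 1 := by simp
    _ ≤ P.parts.sum := Multiset.card_nsmul_le_sum fun _ hi => P.parts_pos hi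
    _ = n := P.parts_sum

def multiplicities (d : ℕ) (P : n.Partition) (i : Fin d) : ℕ :=
  P.parts.count ((i : ℕ) + 1)

theorem sum_succ_mul_multiplicities {d : ℕ} (hn : n ≤ d) (P : n.Partition) :
    ∑ i : Fin d, ((i : ℕ) + 1) * P.multiplicities d i = n := by
  have hsub : P.parts.toFinset ⊆ range (d + 1) := fun k hk =>
    mem_range_succ_iff.2 ((le_of_mem_parts (Multiset.mem_toFinset.1 hk)).trans hn)
  conv_rhs => rw [← P.parts_sum, sum_multiset_count_of_subset _ _ hsub, sum_range_succ']
  simp [multiplicities, Fin.sum_univ_eq_sum_range (fun i => (i + 1) * P.parts.count (i + 1)),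
    mul_comm]

theorem multiplicities_injective {d : ℕ} (hn : n ≤ d) :
    Function.Injective (multiplicities (n := n) d) := by
  intro P Q h
  ext k
  rcases Nat.eq_zero_or_pos k with rfl | hk
  · rw [Multiset.count_eq_zero_of_notMem fun h => (P.parts_pos h).false,
      Multiset.count_eq_zero_of_notMem fun h => (Q.parts_pos h).false]
  rcases le_or_gt k d with hkd | hdk
  · simpa [multiplicities, Nat.sub_add_cancel hk] using congrFun h ⟨k - 1, by omega⟩
  · rw [Multiset.count_eq_zero_of_notMem fun h => (le_of_mem_parts h).not_gt (by omega),
      Multiset.count_eq_zero_of_notMem fun h => (le_of_mem_parts h).not_gt (by omega)]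

theorem card_le_card_filter_sum_succ_mul_eq {d : ℕ} (hn : n ≤ d) :
    Fintype.card n.Partition ≤
      #{g ∈ Fintype.piFinset fun _ : Fin d => range (d + 1) |
        ∑ i : Fin d, ((i : ℕ) + 1) * g i = n} := by
  refine card_le_card_of_injOn (multiplicities d) (fun P _ => ?_)
    (multiplicities_injective hn).injOn
  simp only [coe_filter, Fintype.mem_piFinset, mem_range_succ_iff]
  exact ⟨fun i => (P.count_parts_le _).trans hn, sum_succ_mul_multiplicities hn P⟩

end Nat.Partition

theorem geom_sum_le_inv_one_sub {y : ℝ} (hy0 : 0 ≤ y) (hy1 : y < 1) (n : ℕ) :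
    ∑ i ∈ range n, y ^ i ≤ (1 - y)⁻¹ := by
  simpa only [range_eq_Ico, pow_zero, one_div] using
    geom_sum_Ico_le_of_lt_one (m := 0) (n := n) hy0 hy1

theorem sum_exp_neg_pow_succ_le {s : ℝ} (hs : 0 < s) (n : ℕ) :
    ∑ i ∈ range n, exp (-s) ^ (i + 1) ≤ 1 / s :=
  have hy1 : exp (-s) < 1 := exp_lt_one_iff.2 (neg_neg_of_pos hs)
  calc ∑ i ∈ range n, exp (-s) ^ (i + 1) = exp (-s) * ∑ i ∈ range n, exp (-s) ^ i := by
        simp only [mul_sum, pow_succ']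
    _ ≤ exp (-s) * (1 - exp (-s))⁻¹ :=
        mul_le_mul_of_nonneg_left (geom_sum_le_inv_one_sub (exp_pos _).le hy1 n) (exp_pos _).le
    _ = (exp s - 1)⁻¹ := by
        rw [exp_neg]
        field_simp
    _ ≤ 1 / s := by
        rw [one_div]
        exact inv_anti₀ hs (by linarith [add_one_le_exp s])

theorem hasSum_one_div_nat_add_one_sq :
    HasSum (fun j : ℕ => 1 / ((j : ℝ) + 1) ^ 2) (π ^ 2 / 6) := by
  simpa using (hasSum_nat_add_iff' 1).2 hasSum_zeta_two

theorem prod_inv_one_sub_exp_neg_pow_le {t : ℝ} (ht : 0 < t) (d : ℕ) :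
    ∏ i ∈ range d, (1 - exp (-t) ^ (i + 1))⁻¹ ≤ exp (π ^ 2 / (6 * t)) := by
  have hy0 : ∀ i : ℕ, 0 ≤ exp (-t) ^ (i + 1) := fun i => pow_nonneg (exp_pos _).le _
  have hy1 : ∀ i : ℕ, exp (-t) ^ (i + 1) < 1 := fun i =>
    pow_lt_one₀ (exp_pos _).le (exp_lt_one_iff.2 (neg_neg_of_pos ht)) i.succ_ne_zero
  have hlog : HasSum (fun j : ℕ => ∑ i ∈ range d, (exp (-t) ^ (i + 1)) ^ (j + 1) / (j + 1))
      (∑ i ∈ range d, -log (1 - exp (-t) ^ (i + 1))) :=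
    hasSum_sum fun i _ =>
      hasSum_pow_div_log_of_abs_lt_one (by rw [abs_of_nonneg (hy0 i)]; exact hy1 i)
  have hterm (j : ℕ) : ∑ i ∈ range d, (exp (-t) ^ (i + 1)) ^ (j + 1) / (j + 1)
      ≤ 1 / t * (1 / ((j : ℝ) + 1) ^ 2) := by
    have hj : (0 : ℝ) < j + 1 := by positivity
    have hswap (i : ℕ) : (exp (-t) ^ (i + 1)) ^ (j + 1) = exp (-((j + 1) * t)) ^ (i + 1) := by
      rw [← pow_mul, mul_comm, pow_mul, ← exp_nat_mul]
      push_cast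
      ring_nf
    calc ∑ i ∈ range d, (exp (-t) ^ (i + 1)) ^ (j + 1) / (j + 1)
        = (∑ i ∈ range d, exp (-((j + 1) * t)) ^ (i + 1)) / (j + 1) := by
          simp only [hswap, sum_div]
      _ ≤ 1 / ((j + 1) * t) / (j + 1) :=
          div_le_div_of_nonneg_right (sum_exp_neg_pow_succ_le (by positivity) d) hj.le
      _ = 1 / t * (1 / ((j : ℝ) + 1) ^ 2) := by field_simp
  have hsum := hasSum_le hterm hlog (hasSum_one_div_nat_add_one_sq.mul_left (1 / t))
  calc ∏ i ∈ range d, (1 - exp (-t) ^ (i + 1))⁻¹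
      = exp (∑ i ∈ range d, -log (1 - exp (-t) ^ (i + 1))) := by
        rw [exp_sum]
        refine prod_congr rfl fun i _ => ?_
        rw [exp_neg (log _), exp_log (sub_pos.2 (hy1 i))]
    _ ≤ exp (π ^ 2 / (6 * t)) := exp_le_exp.2 (hsum.trans_eq (by ring))

theorem sum_card_partition_mul_pow_le_prod {x : ℝ} (hx0 : 0 ≤ x) (hx1 : x < 1) (d : ℕ) :
    ∑ q ∈ range (d + 1), (Fintype.card q.Partition : ℝ) * x ^ q ≤
      ∏ i ∈ range d, (1 - x ^ (i + 1))⁻¹ := by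
  set T := Fintype.piFinset fun _ : Fin d => range (d + 1)
  set w : (Fin d → ℕ) → ℕ := fun g => ∑ i : Fin d, ((i : ℕ) + 1) * g i
  calc ∑ q ∈ range (d + 1), (Fintype.card q.Partition : ℝ) * x ^ q
      ≤ ∑ q ∈ range (d + 1), (#{g ∈ T | w g = q} : ℝ) * x ^ q := by
        gcongr with q hq
        exact Nat.Partition.card_le_card_filter_sum_succ_mul_eq (mem_range_succ_iff.1 hq)
    _ = ∑ g ∈ T with w g ∈ range (d + 1), x ^ w g := by
        rw [← sum_fiberwise_eq_sum_filter']
        simp only [sum_const, nsmul_eq_mul]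
    _ ≤ ∑ g ∈ T, x ^ w g :=
        sum_le_sum_of_subset_of_nonneg (filter_subset _ _) fun _ _ _ => pow_nonneg hx0 _
    _ = ∏ i : Fin d, ∑ m ∈ range (d + 1), (x ^ ((i : ℕ) + 1)) ^ m := by
        rw [prod_univ_sum]
        refine sum_congr rfl fun g _ => ?_
        simp only [← pow_mul, prod_pow_eq_pow_sum, w]
    _ ≤ ∏ i : Fin d, (1 - x ^ ((i : ℕ) + 1))⁻¹ := by
        gcongr with i
        exact geom_sum_le_inv_one_sub (pow_nonneg hx0 _) (pow_lt_one₀ hx0 hx1 (by omega)) _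
    _ = ∏ i ∈ range d, (1 - x ^ (i + 1))⁻¹ :=
        Fin.prod_univ_eq_prod_range (fun i => (1 - x ^ (i + 1))⁻¹) d

theorem sum_card_partition_le_exp {t : ℝ} (ht : 0 < t) (d : ℕ) :
    ∑ q ∈ range (d + 1), (Fintype.card q.Partition : ℝ) ≤ exp (t * d + π ^ 2 / (6 * t)) :=
  calc ∑ q ∈ range (d + 1), (Fintype.card q.Partition : ℝ)
      ≤ ∑ q ∈ range (d + 1), exp (t * d) * ((Fintype.card q.Partition : ℝ) * exp (-t) ^ q) := by
        refine sum_le_sum fun q hq => ?_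
        have hq : (q : ℝ) ≤ d := by exact_mod_cast mem_range_succ_iff.1 hq
        have h1 : 1 ≤ exp (t * d) * exp (-t) ^ q := by
          rw [← exp_nat_mul, ← exp_add]
          exact one_le_exp (by nlinarith)
        rw [mul_left_comm]
        exact le_mul_of_one_le_right (by positivity) h1
    _ = exp (t * d) * ∑ q ∈ range (d + 1), (Fintype.card q.Partition : ℝ) * exp (-t) ^ q :=
        (mul_sum _ _ _).symm
    _ ≤ exp (t * d) * exp (π ^ 2 / (6 * t)) := by
        gcongr
        exact (sum_card_partition_mul_pow_le_prod (exp_pos _).le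
          (exp_lt_one_iff.2 (neg_neg_of_pos ht)) d).trans (prod_inv_one_sub_exp_neg_pow_le ht d)
    _ = exp (t * d + π ^ 2 / (6 * t)) := (exp_add _ _).symm

theorem sum_card_partition_le_exp_sqrt (d : ℕ) :
    ∑ q ∈ range (d + 1), (Fintype.card q.Partition : ℝ) ≤ exp (π * √(2 / 3) * √d) := by
  rcases Nat.eq_zero_or_pos d with rfl | hd
  · simp
  have hs : 0 < √(d : ℝ) := sqrt_pos.2 (by exact_mod_cast hd)
  -- `t = π / √(6d)` minimises `t d + π² / (6t)`
  convert sum_card_partition_le_exp (t := π * √(2 / 3) / (2 * √d)) (by positivity) d using 2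
  field_simp
  nlinarith [sq_sqrt (show (0 : ℝ) ≤ 2 / 3 by norm_num), sq_sqrt (Nat.cast_nonneg (α := ℝ) d)]

/-- For every integer `d ≥ 2`, the total number of partition modules
`P↑(d) = Σ_{q=2}^{d} p(q)` satisfies `Σ_{q=2}^{d} p(q) < d^{1/4} · e^{c·√d}`,
where `p(q)` is the number of partitions of `q` and `c = π·√(2/3)`. -/
theorem sum_partitions_lt (d : ℕ) (hd : 2 ≤ d) :
    ∑ q ∈ Finset.Icc 2 d, (Fintype.card (Nat.Partition q) : ℝ)
      < (d : ℝ) ^ ((1 : ℝ) / 4) *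
        Real.exp (Real.pi * Real.sqrt (2 / 3) * Real.sqrt (d : ℝ)) := by
  have hsub : Icc 2 d ⊆ range (d + 1) := fun q hq => mem_range_succ_iff.2 (mem_Icc.1 hq).2
  have hd1 : (1 : ℝ) < (d : ℝ) ^ ((1 : ℝ) / 4) :=
    one_lt_rpow (by exact_mod_cast (show 1 < d by omega)) (by norm_num)
  calc ∑ q ∈ Icc 2 d, (Fintype.card q.Partition : ℝ)
      ≤ ∑ q ∈ range (d + 1), (Fintype.card q.Partition : ℝ) :=
        sum_le_sum_of_subset_of_nonneg hsub fun _ _ _ => by positivity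
    _ ≤ exp (π * √(2 / 3) * √d) := sum_card_partition_le_exp_sqrt d
    _ < _ := lt_mul_of_one_lt_left (exp_pos _) hd1
end

section
/- For every integer d ≥ 2, Σ_{q=2}^{d} e^{c·√q} / q^{3/4} < d^{1/4} · e^{c·√d}, where c = π·√(2/3). -/
open Real Finset

/-!
Write `g q = e^{c√q} / q^{3/4}`, so that the right-hand side is `d · g d`. For `c ≥ 2` the
function `g` is increasing on the integers `q ≥ 2`: the ratio `((q+1)/q)^{3/4} ≤ e^{3/(4q)}` is
beaten by `e^{c(√(q+1) - √q)} ≥ e^{c/(2√(q+1))}`. Hence each of the `d - 1` summands is at most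
`g d`, and the sum is at most `(d - 1) · g d < d · g d`.
-/

lemma two_le_pi_mul_sqrt_two_div_three : (2 : ℝ) ≤ π * √(2 / 3) := by
  have h_sq : √(2 / 3) ^ 2 = 2 / 3 := sq_sqrt (by norm_num)
  have h_ge : (2 / 3 : ℝ) ≤ √(2 / 3) := by nlinarith [sqrt_nonneg (2 / 3 : ℝ)]
  nlinarith [pi_gt_three]

lemma one_add_rpow_le_exp_mul {t p : ℝ} (ht : -1 ≤ t) (hp : 0 ≤ p) :
    (1 + t) ^ p ≤ exp (p * t) :=
  calc (1 + t) ^ p ≤ exp t ^ p :=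
        rpow_le_rpow (by linarith) (by linarith [add_one_le_exp t]) hp
    _ = exp (p * t) := by rw [← exp_mul, mul_comm]

lemma one_div_two_sqrt_le_sqrt_add_one_sub_sqrt {x : ℝ} (hx : 0 ≤ x) :
    1 / (2 * √(x + 1)) ≤ √(x + 1) - √x := by
  have h_pos : 0 < √(x + 1) := sqrt_pos.mpr (by linarith)
  have h_mono : √x ≤ √(x + 1) := sqrt_le_sqrt (by linarith)
  have h_conj : (√(x + 1) - √x) * (√(x + 1) + √x) = 1 := by
    nlinarith [sq_sqrt hx, sq_sqrt (show 0 ≤ x + 1 by linarith)]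
  rw [div_le_iff₀ (by positivity)]
  nlinarith

lemma exp_mul_sqrt_div_rpow_le_succ {c p x : ℝ} (hp : 0 ≤ p) (hx : 0 < x)
    (h : 2 * p * √(x + 1) ≤ c * x) :
    exp (c * √x) / x ^ p ≤ exp (c * √(x + 1)) / (x + 1) ^ p := by
  have h_pos : 0 < √(x + 1) := sqrt_pos.mpr (by linarith)
  have h_exponent : p * x⁻¹ ≤ c * (√(x + 1) - √x) :=
    calc p * x⁻¹ ≤ c * (1 / (2 * √(x + 1))) := by
          rw [← div_eq_mul_inv, mul_one_div, div_le_div_iff₀ hx (by positivity)]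
          linarith
      _ ≤ c * (√(x + 1) - √x) := by
          have hc : 0 ≤ c := nonneg_of_mul_nonneg_left (h.trans' (by positivity)) hx
          exact mul_le_mul_of_nonneg_left (one_div_two_sqrt_le_sqrt_add_one_sub_sqrt hx.le) hc
  have h_ratio : ((x + 1) / x) ^ p ≤ exp (c * (√(x + 1) - √x)) :=
    calc ((x + 1) / x) ^ p = (1 + x⁻¹) ^ p := by rw [add_div, div_self hx.ne', one_div]
      _ ≤ exp (p * x⁻¹) := one_add_rpow_le_exp_mul (by linarith [inv_pos.mpr hx]) hp
      _ ≤ exp (c * (√(x + 1) - √x)) := exp_le_exp.mpr h_exponent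
  rw [div_rpow (by linarith) hx.le, div_le_iff₀ (rpow_pos_of_pos hx p)] at h_ratio
  rw [div_le_div_iff₀ (rpow_pos_of_pos hx p) (rpow_pos_of_pos (by linarith) p)]
  calc exp (c * √x) * (x + 1) ^ p ≤ exp (c * √x) * (exp (c * (√(x + 1) - √x)) * x ^ p) :=
        mul_le_mul_of_nonneg_left h_ratio (exp_pos _).le
    _ = exp (c * √(x + 1)) * x ^ p := by rw [← mul_assoc, ← exp_add]; ring_nf

lemma monotoneOn_exp_mul_sqrt_div_rpow {c : ℝ} (hc : 2 ≤ c) :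
    MonotoneOn (fun q : ℕ ↦ exp (c * √(q : ℝ)) / (q : ℝ) ^ ((3 : ℝ) / 4)) {q | 2 ≤ q} := by
  refine monotoneOn_nat_Ici_of_le_succ fun n hn ↦ ?_
  have hn' : (2 : ℝ) ≤ n := by exact_mod_cast hn
  have h_sqrt : √((n : ℝ) + 1) ≤ n := by
    rw [sqrt_le_left (by linarith)]
    nlinarith
  push_cast
  exact exp_mul_sqrt_div_rpow_le_succ (by norm_num) (by linarith) (by nlinarith)

/-- For every integer `d ≥ 2`,
`Σ_{q=2}^{d} e^{c·√q} / q^{3/4} < d^{1/4} · e^{c·√d}`, where `c = π·√(2/3)`. -/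
theorem sum_exp_sqrt_div_rpow_lt (d : ℕ) (hd : 2 ≤ d) :
    ∑ q ∈ Finset.Icc 2 d,
        Real.exp (Real.pi * Real.sqrt (2 / 3) * Real.sqrt (q : ℝ)) /
          (q : ℝ) ^ ((3 : ℝ) / 4)
      < (d : ℝ) ^ ((1 : ℝ) / 4) *
        Real.exp (Real.pi * Real.sqrt (2 / 3) * Real.sqrt (d : ℝ)) := by
  set g : ℕ → ℝ := fun q ↦ exp (π * √(2 / 3) * √(q : ℝ)) / (q : ℝ) ^ ((3 : ℝ) / 4)
  have hd_pos : (0 : ℝ) < d := by exact_mod_cast (by omega : 0 < d)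
  have h_terms : ∀ q ∈ Icc 2 d, g q ≤ g d := fun q hq ↦
    monotoneOn_exp_mul_sqrt_div_rpow two_le_pi_mul_sqrt_two_div_three
      (mem_Icc.mp hq).1 hd (mem_Icc.mp hq).2
  have h_rhs : (d : ℝ) ^ ((1 : ℝ) / 4) * exp (π * √(2 / 3) * √(d : ℝ)) = d * g d := by
    have h_pow_pos : (0 : ℝ) < (d : ℝ) ^ ((3 : ℝ) / 4) := rpow_pos_of_pos hd_pos _
    simp only [g]
    field_simp
    rw [← rpow_add hd_pos]
    norm_num
  calc ∑ q ∈ Icc 2 d, g q ≤ #(Icc 2 d) • g d := sum_le_card_nsmul _ _ _ h_terms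
    _ = ((d : ℝ) - 1) * g d := by
        rw [Nat.card_Icc, nsmul_eq_mul, Nat.cast_sub (by omega)]; push_cast; ring
    _ < d * g d := by gcongr; linarith
    _ = _ := h_rhs.symm
end

section
/- Let A = (Z/2)[a,b,c]/(a², b², c²), the quotient of the polynomial ring in three variables over the field with two elements by the ideal generated by the squares of the variables. Then every element x of the ideal of A generated by (the images of) a, b and c satisfies x³ = 0. -/
open MvPolynomial

/-- The ideal `(a², b², c²)` in `(ℤ/2)[a,b,c]`, with `a = X 0`, `b = X 1`, `c = X 2`. -/
noncomputable def torusRelations : Ideal (MvPolynomial (Fin 3) (ZMod 2)) :=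
  Ideal.span {(X 0 : MvPolynomial (Fin 3) (ZMod 2)) ^ 2, (X 1) ^ 2, (X 2) ^ 2}

set_option maxHeartbeats 1000000 in
/-- In `A = (ℤ/2)[a,b,c]/(a², b², c²)` (the mod-2 cohomology algebra of the 3-torus),
every element of the ideal generated by the images of `a`, `b`, `c` has vanishing cube. -/
theorem cube_eq_zero_of_mem_augmentation_ideal :
    ∀ x ∈ Ideal.span ({Ideal.Quotient.mk torusRelations (X 0),
        Ideal.Quotient.mk torusRelations (X 1),
        Ideal.Quotient.mk torusRelations (X 2)} :
        Set (MvPolynomial (Fin 3) (ZMod 2) ⧸ torusRelations)),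
      x ^ 3 = 0 := by
  intro x hx
  set mk := Ideal.Quotient.mk torusRelations
  set a := mk (X 0) with ha'
  set b := mk (X 1) with hb'
  set c := mk (X 2) with hc'
  have ha : a ^ 2 = 0 := by
    rw [ha', ← map_pow, Ideal.Quotient.eq_zero_iff_mem]
    exact Ideal.subset_span (by simp)
  have hb : b ^ 2 = 0 := by
    rw [hb', ← map_pow, Ideal.Quotient.eq_zero_iff_mem]
    exact Ideal.subset_span (by simp)
  have hc : c ^ 2 = 0 := by
    rw [hc', ← map_pow, Ideal.Quotient.eq_zero_iff_mem]
    exact Ideal.subset_span (by simp)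
  have h2 : (2 : MvPolynomial (Fin 3) (ZMod 2) ⧸ torusRelations) = 0 := by
    have h0 : (2 : MvPolynomial (Fin 3) (ZMod 2)) = 0 := by
      have : (2 : MvPolynomial (Fin 3) (ZMod 2)) = C (2 : ZMod 2) := by
        rw [map_ofNat]
      rw [this, show (2 : ZMod 2) = 0 from rfl, map_zero]
    calc (2 : MvPolynomial (Fin 3) (ZMod 2) ⧸ torusRelations)
        = mk 2 := (map_ofNat mk 2).symm
      _ = 0 := by rw [h0, map_zero]
  rcases Ideal.mem_span_insert.mp hx with ⟨p, y, hy, rfl⟩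
  rcases Ideal.mem_span_insert.mp hy with ⟨q, z, hz, rfl⟩
  rcases Ideal.mem_span_singleton'.mp hz with ⟨r, rfl⟩
  linear_combination (p ^ 3 * a + 3 * p ^ 2 * q * b + 3 * p ^ 2 * r * c) * ha +
    (q ^ 3 * b + 3 * q ^ 2 * p * a + 3 * q ^ 2 * r * c) * hb +
    (r ^ 3 * c + 3 * r ^ 2 * p * a + 3 * r ^ 2 * q * b) * hc +
    3 * p * q * r * a * b * c * h2
end
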